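/- Let k be a field and (X, Δ, ε, T) a ternary self-distributive (TSD) object in vector spaces over k (Δ coassociative cocommutative counital, Δ₃ = (Δ⊗id)∘Δ, T : X^⊗3 → X a coalgebra morphism satisfying the ternary self-distributivity condition). Let ψ : X^⊗3 → X be linear, k[ℏ] := k[T]/(T²) the dual numbers, X_ℏ := k[ℏ]⊗_k X, and T' := T + ℏψ (k[ℏ]-linear extension). Then: (i) T' satisfies the ternary self-distributivity condition T'(T'(x⊗y⊗z)⊗w⊗u) = T'(T'(x⊗w⁽¹⁾⊗u⁽¹⁾)⊗T'(y⊗w⁽²⁾⊗u⁽²⁾)⊗T'(z⊗w⁽³⁾⊗u⁽³⁾)) on X_ℏ if and only if δ²ψ = 0; (ii) T' is a coalgebra morphism, i.e. Δ₃∘T' = (T'⊗T'⊗T')∘sh∘(Δ₃⊗Δ₃⊗Δ₃) on X_ℏ, if and only if ψ satisfies the TSD 2-cochain condition Δ₃∘ψ = (ψ⊗T⊗T + T⊗ψ⊗T + T⊗T⊗ψ)∘sh∘(Δ₃⊗Δ₃⊗Δ₃); and (iii) if ψ = δ¹f for a ternary coderivation f, then (id − ℏf)∘T' = T∘((id − ℏf)⊗(id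 − ℏf)⊗(id − ℏf)) on X_ℏ, so the deformation T' is equivalent to the trivial one. -/
import Mathlib


open TensorProduct

noncomputable section

section TSDCore

variable {k : Type*} [Field k] {X : Type*} [AddCommGroup X] [Module k X]

/-- The ternary comultiplication `Δ₃ = (Δ ⊗ id) ∘ Δ`. -/
def D3 (Δ : X →ₗ[k] X ⊗[k] X) : X →ₗ[k] (X ⊗[k] X) ⊗[k] X :=
  TensorProduct.map Δ LinearMap.id ∘ₗ Δ

/-- `f : X → X` is a ternary coderivation:
`Δ₃∘f = (f⊗id⊗id + id⊗f⊗id + id⊗id⊗f)∘Δ₃`. -/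
def IsTernaryCoderivation (Δ : X →ₗ[k] X ⊗[k] X) (f : X →ₗ[k] X) : Prop :=
  D3 Δ ∘ₗ f
    = (TensorProduct.map (TensorProduct.map f LinearMap.id) LinearMap.id
        + TensorProduct.map (TensorProduct.map LinearMap.id f) LinearMap.id
        + TensorProduct.map (LinearMap.id : X ⊗[k] X →ₗ[k] X ⊗[k] X) f) ∘ₗ D3 Δ

/-- The TSD 2-cochain condition
`Δ₃∘ψ = (ψ⊗T⊗T + T⊗ψ⊗T + T⊗T⊗ψ)∘sh∘(Δ₃⊗Δ₃⊗Δ₃)`, relative to the shuffle `sh`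
(which sends `x₁⊗…⊗x₉` to `x₁⊗x₄⊗x₇⊗x₂⊗x₅⊗x₈⊗x₃⊗x₆⊗x₉`). -/
def IsTSD2Cochain (Δ : X →ₗ[k] X ⊗[k] X) (T : (X ⊗[k] X) ⊗[k] X →ₗ[k] X)
    (sh : (((X ⊗[k] X) ⊗[k] X) ⊗[k] ((X ⊗[k] X) ⊗[k] X)) ⊗[k] ((X ⊗[k] X) ⊗[k] X) →ₗ[k]
      (((X ⊗[k] X) ⊗[k] X) ⊗[k] ((X ⊗[k] X) ⊗[k] X)) ⊗[k] ((X ⊗[k] X) ⊗[k] X))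
    (ψ : (X ⊗[k] X) ⊗[k] X →ₗ[k] X) : Prop :=
  D3 Δ ∘ₗ ψ
    = (TensorProduct.map (TensorProduct.map ψ T) T
        + TensorProduct.map (TensorProduct.map T ψ) T
        + TensorProduct.map (TensorProduct.map T T) ψ) ∘ₗ sh ∘ₗ
      TensorProduct.map (TensorProduct.map (D3 Δ) (D3 Δ)) (D3 Δ)

/-- The coalgebra-morphism condition `Δ₃∘T = (T⊗T⊗T)∘sh∘(Δ₃⊗Δ₃⊗Δ₃)`. -/
def IsCoalgMor3 (Δ : X →ₗ[k] X ⊗[k] X) (T : (X ⊗[k] X) ⊗[k] X →ₗ[k] X)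
    (sh : (((X ⊗[k] X) ⊗[k] X) ⊗[k] ((X ⊗[k] X) ⊗[k] X)) ⊗[k] ((X ⊗[k] X) ⊗[k] X) →ₗ[k]
      (((X ⊗[k] X) ⊗[k] X) ⊗[k] ((X ⊗[k] X) ⊗[k] X)) ⊗[k] ((X ⊗[k] X) ⊗[k] X)) : Prop :=
  D3 Δ ∘ₗ T
    = TensorProduct.map (TensorProduct.map T T) T ∘ₗ sh ∘ₗ
      TensorProduct.map (TensorProduct.map (D3 Δ) (D3 Δ)) (D3 Δ)

/-- The ternary self-distributivity condition
`T(T(x⊗y⊗z)⊗w⊗u) = T(T(x⊗w⁽¹⁾⊗u⁽¹⁾)⊗T(y⊗w⁽²⁾⊗u⁽²⁾)⊗T(z⊗w⁽³⁾⊗u⁽³⁾))`, stated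
compositionally on `X^{⊗3} ⊗ X^{⊗2}`, relative to the rearrangement `ρ` (which sends
`(x⊗y⊗z)⊗((w₁⊗w₂⊗w₃)⊗(u₁⊗u₂⊗u₃))` to `(x⊗w₁⊗u₁)⊗(y⊗w₂⊗u₂)⊗(z⊗w₃⊗u₃)`). -/
def IsTSDMap (Δ : X →ₗ[k] X ⊗[k] X) (T : (X ⊗[k] X) ⊗[k] X →ₗ[k] X)
    (ρ : ((X ⊗[k] X) ⊗[k] X) ⊗[k] (((X ⊗[k] X) ⊗[k] X) ⊗[k] ((X ⊗[k] X) ⊗[k] X)) →ₗ[k]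
      (((X ⊗[k] X) ⊗[k] X) ⊗[k] ((X ⊗[k] X) ⊗[k] X)) ⊗[k] ((X ⊗[k] X) ⊗[k] X)) : Prop :=
  T ∘ₗ (TensorProduct.assoc k X X X).symm.toLinearMap ∘ₗ
      TensorProduct.map T (LinearMap.id : X ⊗[k] X →ₗ[k] X ⊗[k] X)
    = T ∘ₗ TensorProduct.map (TensorProduct.map T T) T ∘ₗ ρ ∘ₗ
      TensorProduct.map LinearMap.id (TensorProduct.map (D3 Δ) (D3 Δ))

/-- The TSD first differential
`δ¹f(x⊗y⊗z) = f(T(x⊗y⊗z)) − T(f(x)⊗y⊗z) − T(x⊗f(y)⊗z) − T(x⊗y⊗f(z))`. -/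
def tsdD1 (T : (X ⊗[k] X) ⊗[k] X →ₗ[k] X) (f : X →ₗ[k] X) :
    (X ⊗[k] X) ⊗[k] X →ₗ[k] X :=
  f ∘ₗ T - T ∘ₗ TensorProduct.map (TensorProduct.map f LinearMap.id) LinearMap.id
    - T ∘ₗ TensorProduct.map (TensorProduct.map LinearMap.id f) LinearMap.id
    - T ∘ₗ TensorProduct.map (LinearMap.id : X ⊗[k] X →ₗ[k] X ⊗[k] X) f

/-- The TSD second differential `δ²ψ`, stated compositionally on `X^{⊗3} ⊗ X^{⊗2}`:
`δ²ψ(x⊗y⊗z⊗w⊗u) = T(ψ(x⊗y⊗z)⊗w⊗u) + ψ(T(x⊗y⊗z)⊗w⊗u)`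
`− ψ(T(x⊗w⁽¹⁾⊗u⁽¹⁾)⊗T(y⊗w⁽²⁾⊗u⁽²⁾)⊗T(z⊗w⁽³⁾⊗u⁽³⁾))`
`− T(ψ(x⊗w⁽¹⁾⊗u⁽¹⁾)⊗T(y⊗w⁽²⁾⊗u⁽²⁾)⊗T(z⊗w⁽³⁾⊗u⁽³⁾))`
`− T(T(x⊗w⁽¹⁾⊗u⁽¹⁾)⊗ψ(y⊗w⁽²⁾⊗u⁽²⁾)⊗T(z⊗w⁽³⁾⊗u⁽³⁾))`
`− T(T(x⊗w⁽¹⁾⊗u⁽¹⁾)⊗T(y⊗w⁽²⁾⊗u⁽²⁾)⊗ψ(z⊗w⁽³⁾⊗u⁽³⁾))`, relative to `ρ`. -/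
def tsdD2 (Δ : X →ₗ[k] X ⊗[k] X) (T : (X ⊗[k] X) ⊗[k] X →ₗ[k] X)
    (ρ : ((X ⊗[k] X) ⊗[k] X) ⊗[k] (((X ⊗[k] X) ⊗[k] X) ⊗[k] ((X ⊗[k] X) ⊗[k] X)) →ₗ[k]
      (((X ⊗[k] X) ⊗[k] X) ⊗[k] ((X ⊗[k] X) ⊗[k] X)) ⊗[k] ((X ⊗[k] X) ⊗[k] X))
    (ψ : (X ⊗[k] X) ⊗[k] X →ₗ[k] X) :
    ((X ⊗[k] X) ⊗[k] X) ⊗[k] (X ⊗[k] X) →ₗ[k] X :=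
  T ∘ₗ (TensorProduct.assoc k X X X).symm.toLinearMap ∘ₗ
      TensorProduct.map ψ (LinearMap.id : X ⊗[k] X →ₗ[k] X ⊗[k] X)
    + ψ ∘ₗ (TensorProduct.assoc k X X X).symm.toLinearMap ∘ₗ
      TensorProduct.map T (LinearMap.id : X ⊗[k] X →ₗ[k] X ⊗[k] X)
    - ψ ∘ₗ TensorProduct.map (TensorProduct.map T T) T ∘ₗ ρ ∘ₗ
      TensorProduct.map LinearMap.id (TensorProduct.map (D3 Δ) (D3 Δ))
    - T ∘ₗ TensorProduct.map (TensorProduct.map ψ T) T ∘ₗ ρ ∘ₗ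
      TensorProduct.map LinearMap.id (TensorProduct.map (D3 Δ) (D3 Δ))
    - T ∘ₗ TensorProduct.map (TensorProduct.map T ψ) T ∘ₗ ρ ∘ₗ
      TensorProduct.map LinearMap.id (TensorProduct.map (D3 Δ) (D3 Δ))
    - T ∘ₗ TensorProduct.map (TensorProduct.map T T) ψ ∘ₗ ρ ∘ₗ
      TensorProduct.map LinearMap.id (TensorProduct.map (D3 Δ) (D3 Δ))

end TSDCore

/-- The pair model of a `k[ℏ]`-linear map `F₀ + ℏ·F₁` (`ℏ² = 0`) between the scalar
extensions `M_ℏ = k[ℏ] ⊗ M` and `N_ℏ = k[ℏ] ⊗ N`, where `M_ℏ` is identified with `M × M`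
via `(m₀, m₁) ↦ m₀ + ℏ·m₁`. -/
def eps {k : Type*} [Field k] {M N : Type*} [AddCommMonoid M] [Module k M]
    [AddCommMonoid N] [Module k N] (F₀ F₁ : M →ₗ[k] N) : M × M →ₗ[k] N × N :=
  LinearMap.prod (F₀ ∘ₗ LinearMap.fst k M M)
    (F₀ ∘ₗ LinearMap.snd k M M + F₁ ∘ₗ LinearMap.fst k M M)

lemma eps_comp {k : Type*} [Field k] {M N P : Type*} [AddCommMonoid M] [Module k M]
    [AddCommMonoid N] [Module k N] [AddCommMonoid P] [Module k P]
    (A B : N →ₗ[k] P) (C D : M →ₗ[k] N) :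
    eps A B ∘ₗ eps C D = eps (A ∘ₗ C) (A ∘ₗ D + B ∘ₗ C) := by
  ext m <;> simp [eps]

lemma eps_eq_iff {k : Type*} [Field k] {M N : Type*} [AddCommMonoid M] [Module k M]
    [AddCommMonoid N] [Module k N] (A B A' B' : M →ₗ[k] N) :
    eps A B = eps A' B' ↔ A = A' ∧ B = B' := by
  constructor
  · intro h
    constructor <;> ext m
    · simpa [eps] using congrArg Prod.fst (LinearMap.congr_fun h (m, 0))
    · simpa [eps] using congrArg Prod.snd (LinearMap.congr_fun h (m, 0))
  · rintro ⟨rfl, rfl⟩; rfl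

/-- Infinitesimal deformations of the TSD structure `T` of a TSD object `(X, Δ, ε, T)`,
over the dual numbers `k[ℏ]` (pair model: `X_ℏ = X × X`, `T' = T + ℏψ = eps T ψ`):
(i) `T'` satisfies ternary self-distributivity on `X_ℏ` iff `δ²ψ = 0`;
(ii) `T'` is a coalgebra morphism on `X_ℏ` iff `ψ` satisfies the TSD 2-cochain condition;
(iii) if `ψ = δ¹f` for a ternary coderivation `f`, then
`(id − ℏf)∘T' = T∘((id − ℏf)⊗(id − ℏf)⊗(id − ℏf))`, i.e. the deformation is trivial. -/
theorem stmt17 {k : Type*} [Field k] {X : Type*} [AddCommGroup X] [Module k X]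
    (Δ : X →ₗ[k] X ⊗[k] X) (ε : X →ₗ[k] k)
    (hcoassoc : (TensorProduct.assoc k X X X).toLinearMap ∘ₗ
        TensorProduct.map Δ LinearMap.id ∘ₗ Δ = TensorProduct.map LinearMap.id Δ ∘ₗ Δ)
    (hcounitl : (TensorProduct.lid k X).toLinearMap ∘ₗ
        TensorProduct.map ε LinearMap.id ∘ₗ Δ = LinearMap.id)
    (hcounitr : (TensorProduct.rid k X).toLinearMap ∘ₗ
        TensorProduct.map LinearMap.id ε ∘ₗ Δ = LinearMap.id)
    (hcocomm : (TensorProduct.comm k X X).toLinearMap ∘ₗ Δ = Δ)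
    (T : (X ⊗[k] X) ⊗[k] X →ₗ[k] X)
    (sh : (((X ⊗[k] X) ⊗[k] X) ⊗[k] ((X ⊗[k] X) ⊗[k] X)) ⊗[k] ((X ⊗[k] X) ⊗[k] X) →ₗ[k]
      (((X ⊗[k] X) ⊗[k] X) ⊗[k] ((X ⊗[k] X) ⊗[k] X)) ⊗[k] ((X ⊗[k] X) ⊗[k] X))
    (hsh : ∀ x1 x2 x3 x4 x5 x6 x7 x8 x9 : X,
      sh ((((x1 ⊗ₜ[k] x2) ⊗ₜ[k] x3) ⊗ₜ[k] ((x4 ⊗ₜ[k] x5) ⊗ₜ[k] x6)) ⊗ₜ[k]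
            ((x7 ⊗ₜ[k] x8) ⊗ₜ[k] x9))
        = (((x1 ⊗ₜ[k] x4) ⊗ₜ[k] x7) ⊗ₜ[k] ((x2 ⊗ₜ[k] x5) ⊗ₜ[k] x8)) ⊗ₜ[k]
            ((x3 ⊗ₜ[k] x6) ⊗ₜ[k] x9))
    (ρ : ((X ⊗[k] X) ⊗[k] X) ⊗[k] (((X ⊗[k] X) ⊗[k] X) ⊗[k] ((X ⊗[k] X) ⊗[k] X)) →ₗ[k]
      (((X ⊗[k] X) ⊗[k] X) ⊗[k] ((X ⊗[k] X) ⊗[k] X)) ⊗[k] ((X ⊗[k] X) ⊗[k] X))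
    (hρ : ∀ x y z w1 w2 w3 u1 u2 u3 : X,
      ρ (((x ⊗ₜ[k] y) ⊗ₜ[k] z) ⊗ₜ[k]
            (((w1 ⊗ₜ[k] w2) ⊗ₜ[k] w3) ⊗ₜ[k] ((u1 ⊗ₜ[k] u2) ⊗ₜ[k] u3)))
        = (((x ⊗ₜ[k] w1) ⊗ₜ[k] u1) ⊗ₜ[k] ((y ⊗ₜ[k] w2) ⊗ₜ[k] u2)) ⊗ₜ[k]
            ((z ⊗ₜ[k] w3) ⊗ₜ[k] u3))
    (hTmor : IsCoalgMor3 Δ T sh) (hTSD : IsTSDMap Δ T ρ)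
    (ψ : (X ⊗[k] X) ⊗[k] X →ₗ[k] X) :
    -- (i) `T' = T + ℏψ` is self-distributive on `X_ℏ` iff `δ²ψ = 0`
    ((eps T ψ ∘ₗ eps ((TensorProduct.assoc k X X X).symm.toLinearMap) 0 ∘ₗ
        eps (TensorProduct.map T (LinearMap.id : X ⊗[k] X →ₗ[k] X ⊗[k] X))
          (TensorProduct.map ψ (LinearMap.id : X ⊗[k] X →ₗ[k] X ⊗[k] X))
      = eps T ψ ∘ₗ
        eps (TensorProduct.map (TensorProduct.map T T) T)
          (TensorProduct.map (TensorProduct.map ψ T) T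
            + TensorProduct.map (TensorProduct.map T ψ) T
            + TensorProduct.map (TensorProduct.map T T) ψ) ∘ₗ
        eps ρ 0 ∘ₗ
        eps (TensorProduct.map LinearMap.id (TensorProduct.map (D3 Δ) (D3 Δ))) 0)
      ↔ tsdD2 Δ T ρ ψ = 0)
    -- (ii) `T'` is a coalgebra morphism on `X_ℏ` iff `ψ` is a TSD 2-cochain
    ∧ ((eps (D3 Δ) 0 ∘ₗ eps T ψ
        = eps (TensorProduct.map (TensorProduct.map T T) T)
            (TensorProduct.map (TensorProduct.map ψ T) T
              + TensorProduct.map (TensorProduct.map T ψ) T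
              + TensorProduct.map (TensorProduct.map T T) ψ) ∘ₗ
          eps sh 0 ∘ₗ
          eps (TensorProduct.map (TensorProduct.map (D3 Δ) (D3 Δ)) (D3 Δ)) 0)
      ↔ IsTSD2Cochain Δ T sh ψ)
    -- (iii) if `ψ = δ¹f` with `f` a ternary coderivation then the deformation is trivial
    ∧ (∀ f : X →ₗ[k] X, IsTernaryCoderivation Δ f → ψ = tsdD1 T f →
        eps LinearMap.id (-f) ∘ₗ eps T ψ
          = eps T 0 ∘ₗ
            eps LinearMap.id
              (-(TensorProduct.map (TensorProduct.map f (LinearMap.id : X →ₗ[k] X))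
                    (LinearMap.id : X →ₗ[k] X))
                - TensorProduct.map (TensorProduct.map (LinearMap.id : X →ₗ[k] X) f)
                    (LinearMap.id : X →ₗ[k] X)
                - TensorProduct.map (LinearMap.id : X ⊗[k] X →ₗ[k] X ⊗[k] X) f)) := by
  unfold IsTSDMap at hTSD
  unfold IsCoalgMor3 at hTmor
  refine ⟨?_, ?_, ?_⟩
  · simp only [eps_comp]; rw [eps_eq_iff]
    simp only [LinearMap.zero_comp, LinearMap.comp_zero, add_zero, zero_add,
      LinearMap.add_comp, LinearMap.comp_add]
    rw [and_iff_right hTSD]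
    constructor
    · intro h
      rw [tsdD2, h]
      abel
    · intro h
      rw [tsdD2] at h
      rw [← sub_eq_zero, ← h]
      abel
  · simp only [eps_comp]; rw [eps_eq_iff]
    simp only [LinearMap.zero_comp, LinearMap.comp_zero, add_zero, zero_add]
    unfold IsTSD2Cochain
    exact and_iff_right hTmor
  · intro f hf hpsi
    subst hpsi
    simp only [eps_comp]; rw [eps_eq_iff]
    refine ⟨by simp, ?_⟩
    simp only [tsdD1, LinearMap.id_comp, LinearMap.zero_comp, add_zero,
      LinearMap.neg_comp, LinearMap.comp_neg, LinearMap.comp_sub]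
    abel

end
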